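/- arXiv:1009.0121 — 5 statements merged into one kernel-verified Lean document; each statement's English description precedes it below -/
import Mathlib

section
/- Let R be an idealic semiring and f : A → B a homomorphism of complete idealic semirings. For a prime element p of B, the inverse image f⁻¹(p) := sup { x ∈ A | f(x) ≤ p } is a prime element of A. -/
/-!
Since `f` preserves all suprema, `p ↦ sSup {x | f x ≤ p}` is right adjoint to `f`:
`x ≤ f⁻¹(p) ↔ f x ≤ p`. Through this equivalence and `f 1 = 1`, `f (a * b) = f a * f b`,
the two primality conditions for `f⁻¹(p)` become literally those for `p`.
-/

/-- An element `p` of an idealic semiring is prime if `{a | a ≰ p}` is a multiplicative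
submonoid: `1 ≰ p`, and `a ≰ p, b ≰ p` imply `a*b ≰ p`. -/
def IsPrimeElt {R : Type*} [LE R] [Mul R] [One R] (p : R) : Prop :=
  ¬ (1 : R) ≤ p ∧ ∀ a b : R, ¬ a ≤ p → ¬ b ≤ p → ¬ a * b ≤ p

section SSupPreserving

variable {A B : Type*} [CompleteSemilatticeSup A] [CompleteSemilatticeSup B] {f : A → B}

theorem monotone_of_map_sSup (hf : ∀ S : Set A, f (sSup S) = sSup (f '' S)) : Monotone f := by
  intro a b hab
  calc f a ≤ sSup (f '' Set.Iic b) := le_sSup ⟨a, hab, rfl⟩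
    _ = f b := by rw [← hf, isLUB_Iic.sSup_eq]

theorem galoisConnection_of_map_sSup (hf : ∀ S : Set A, f (sSup S) = sSup (f '' S)) :
    GaloisConnection f (fun p => sSup {x | f x ≤ p}) := by
  intro x p
  refine ⟨fun hx => le_sSup hx, fun hx => ?_⟩
  calc f x ≤ f (sSup {x | f x ≤ p}) := monotone_of_map_sSup hf hx
    _ = sSup (f '' {x | f x ≤ p}) := hf _
    _ ≤ p := sSup_le (by rintro _ ⟨y, hy, rfl⟩; exact hy)

end SSupPreserving

theorem IsPrimeElt.of_galoisConnection {A B : Type*} [Preorder A] [Preorder B]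
    [Mul A] [One A] [Mul B] [One B] {f : A → B} {g : B → A} (gc : GaloisConnection f g)
    (hmul : ∀ a b : A, f (a * b) = f a * f b) (hone : f 1 = 1) {p : B} (hp : IsPrimeElt p) :
    IsPrimeElt (g p) := by
  simp only [IsPrimeElt, ← gc.le_iff_le, hmul, hone]
  exact ⟨hp.1, fun a b => hp.2 (f a) (f b)⟩

theorem stmt10_general {A B : Type*} [CompleteLattice A] [CommMonoid A]
    [CompleteLattice B] [CommMonoid B]
    (f : A → B)
    (hsup : ∀ S : Set A, f (sSup S) = sSup (f '' S))
    (hmul : ∀ a b : A, f (a * b) = f a * f b)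
    (hone : f 1 = 1)
    (p : B) (hp : IsPrimeElt p) :
    IsPrimeElt (sSup {x : A | f x ≤ p}) :=
  hp.of_galoisConnection (galoisConnection_of_map_sSup hsup) hmul hone

/-- For a homomorphism `f : A → B` of complete idealic semirings and a
prime element `p` of `B`, the inverse image `f⁻¹(p) = sup {x | f x ≤ p}` is a prime
element of `A`. -/
theorem stmt10 {A B : Type*} [CompleteLattice A] [CommMonoid A]
    [CompleteLattice B] [CommMonoid B]
    (hdistA : ∀ (a : A) (S : Set A), a * sSup S = ⨆ b ∈ S, a * b)
    (h1A : (1 : A) = ⊤)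
    (hdistB : ∀ (a : B) (S : Set B), a * sSup S = ⨆ b ∈ S, a * b)
    (h1B : (1 : B) = ⊤)
    (f : A → B)
    (hsup : ∀ S : Set A, f (sSup S) = sSup (f '' S))
    (hmul : ∀ a b : A, f (a * b) = f a * f b)
    (hone : f 1 = 1)
    (p : B) (hp : IsPrimeElt p) :
    IsPrimeElt (sSup {x : A | f x ≤ p}) :=
  stmt10_general f hsup hmul hone p hp
end

section
/- The functor Spec : IRng† → Sob^op sending a complete idealic semiring to its space of prime elements is left adjoint to the functor C : Sob^op → IRng† sending a sober space X to its lattice of closed sets (with join = intersection, multiplication = union). The unit is a ↦ V(a) and the counit sends x ∈ X to the closure of {x}, and the counit is a homeomorphism. -/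
/-- The spectrum of an idealic semiring: its set of prime elements. -/
def SpecT (R : Type*) [LE R] [Mul R] [One R] : Type _ := {p : R // IsPrimeElt p}

/-- The topology on the spectrum, with closed sets the `V(a) = {p | a ≤ p}`. -/
instance (R : Type*) [LE R] [Mul R] [One R] : TopologicalSpace (SpecT R) :=
  TopologicalSpace.generateFrom {U : Set (SpecT R) | ∃ a : R, U = {p : SpecT R | ¬ a ≤ p.1}}

def Vset {R : Type*} [LE R] [Mul R] [One R] (a : R) : Set (SpecT R) :=
  {p : SpecT R | a ≤ p.1}

lemma isClosed_Vset {R : Type*} [LE R] [Mul R] [One R] (a : R) : IsClosed (Vset a) := by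
  rw [← isOpen_compl_iff]
  exact TopologicalSpace.isOpen_generateFrom_of_mem
    ⟨a, by ext p; simp [Vset]⟩

/-- The lattice `C(X)` of closed subsets of `X`, ordered by reverse inclusion
(so supremum = intersection, bottom = `X`, top = `∅`). -/
abbrev Cl (X : Type*) [TopologicalSpace X] := (TopologicalSpace.Closeds X)ᵒᵈ

/-- Multiplication on `C(X)` is union of closed sets, with unit `∅` (the top element). -/
instance (X : Type*) [TopologicalSpace X] : CommMonoid (Cl X) where
  mul a b := a ⊓ b
  one := ⊤
  mul_assoc a b c := inf_assoc a b c
  mul_comm a b := inf_comm a b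
  one_mul a := top_inf_eq a
  mul_one a := inf_top_eq a

/-- A homomorphism of complete idealic semirings from `R` to the semiring `C(X)` of
closed subsets of `X`: it preserves arbitrary suprema, multiplication and `1`. -/
def IsHom {R X : Type*} [CompleteLattice R] [CommMonoid R] [TopologicalSpace X]
    (h : R → Cl X) : Prop :=
  (∀ S : Set R, h (sSup S) = sSup (h '' S)) ∧
  (∀ a b : R, h (a * b) = h a * h b) ∧
  h 1 = 1

/-- The map `Hom_Top(X, Spec R) → (R → C(X))`, `g ↦ (a ↦ g⁻¹(V(a)))`. -/
def specMap {R X : Type*} [CompleteLattice R] [CommMonoid R] [TopologicalSpace X]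
    (g : C(X, SpecT R)) : R → Cl X :=
  fun a => OrderDual.toDual ⟨g ⁻¹' Vset a, (isClosed_Vset a).preimage g.continuous⟩

open TopologicalSpace OrderDual

section PrimeDownSet

variable {R : Type*} [CompleteLattice R] [Mul R] [One R]

structure IsPrimeDownSet (D : Set R) : Prop where
  sSup_mem_iff : ∀ S : Set R, sSup S ∈ D ↔ S ⊆ D
  mul_mem_iff : ∀ a b : R, a * b ∈ D ↔ a ∈ D ∨ b ∈ D
  one_notMem : (1 : R) ∉ D

namespace IsPrimeDownSet

variable {D : Set R}

lemma mem_of_le (hD : IsPrimeDownSet D) {a b : R} (hab : a ≤ b) (hb : b ∈ D) : a ∈ D :=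
  (hD.sSup_mem_iff {a, b}).1 (by rwa [sSup_pair, sup_eq_right.2 hab]) (Set.mem_insert a _)

lemma le_sSup_iff_mem (hD : IsPrimeDownSet D) {a : R} : a ≤ sSup D ↔ a ∈ D :=
  ⟨fun h => hD.mem_of_le h ((hD.sSup_mem_iff D).2 subset_rfl), fun h => le_sSup h⟩

def point (hD : IsPrimeDownSet D) : SpecT R :=
  ⟨sSup D, fun h => hD.one_notMem (hD.le_sSup_iff_mem.1 h), fun a b ha hb hab =>
    ((hD.mul_mem_iff a b).1 (hD.le_sSup_iff_mem.1 hab)).elim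
      (fun h => ha (hD.le_sSup_iff_mem.2 h)) (fun h => hb (hD.le_sSup_iff_mem.2 h))⟩

lemma le_point_iff (hD : IsPrimeDownSet D) {a : R} : a ≤ hD.point.1 ↔ a ∈ D :=
  hD.le_sSup_iff_mem

end IsPrimeDownSet

end PrimeDownSet

section IdealicSemiring

variable {R : Type*} [CompleteLattice R] [CommMonoid R]

lemma mul_le_left_of_mul_sSup (hdist : ∀ (a : R) (S : Set R), a * sSup S = ⨆ b ∈ S, a * b)
    (h1 : (1 : R) = ⊤) (a b : R) : a * b ≤ a :=
  calc a * b ≤ a * b ⊔ a * 1 := le_sup_left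
    _ = a * sSup {b, 1} := by rw [hdist, iSup_pair]
    _ = a := by rw [sSup_pair, h1, sup_top_eq, ← h1, mul_one]

lemma IsPrimeElt.mul_le_iff (hdist : ∀ (a : R) (S : Set R), a * sSup S = ⨆ b ∈ S, a * b)
    (h1 : (1 : R) = ⊤) {p : R} (hp : IsPrimeElt p) (a b : R) :
    a * b ≤ p ↔ a ≤ p ∨ b ≤ p := by
  refine ⟨fun hab => ?_, ?_⟩
  · by_contra! h
    exact hp.2 a b h.1 h.2 hab
  · rintro (ha | hb)
    · exact (mul_le_left_of_mul_sSup hdist h1 a b).trans ha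
    · exact (mul_comm a b ▸ mul_le_left_of_mul_sSup hdist h1 b a).trans hb

lemma isPrimeDownSet_Iic (hdist : ∀ (a : R) (S : Set R), a * sSup S = ⨆ b ∈ S, a * b)
    (h1 : (1 : R) = ⊤) (p : SpecT R) : IsPrimeDownSet (Set.Iic p.1) :=
  ⟨fun _ => sSup_le_iff, p.2.mul_le_iff hdist h1, p.2.1⟩

end IdealicSemiring

namespace Cl

variable {X : Type*} [TopologicalSpace X]

def toSet (u : Cl X) : Set X := (ofDual u : Closeds X)

lemma toSet_injective : Function.Injective (toSet (X := X)) := fun _ _ h =>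
  ofDual.injective (SetLike.coe_injective h)

lemma isClosed_toSet (u : Cl X) : IsClosed u.toSet := (ofDual u).isClosed

lemma toSet_mul (u v : Cl X) : (u * v).toSet = u.toSet ∪ v.toSet :=
  Closeds.coe_sup (ofDual u) (ofDual v)

lemma toSet_one : (1 : Cl X).toSet = ∅ := Closeds.coe_bot

lemma toSet_sSup (S : Set (Cl X)) : (sSup S).toSet = ⋂ u ∈ S, u.toSet := by
  rw [toSet, ofDual_sSup, Closeds.coe_sInf]
  rfl

lemma le_iff_toSet_subset {u v : Cl X} : u ≤ v ↔ v.toSet ⊆ u.toSet := Iff.rfl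

lemma isPrimeDownSet_setOf_mem (x : X) : IsPrimeDownSet {u : Cl X | x ∈ u.toSet} where
  sSup_mem_iff S := by simp only [Set.mem_ofPred_eq, toSet_sSup, Set.mem_iInter₂]; rfl
  mul_mem_iff u v := by simp only [Set.mem_ofPred_eq, toSet_mul, Set.mem_union]
  one_notMem := by simp [toSet_one]

lemma isIrreducible_toSet (p : SpecT (Cl X)) : IsIrreducible p.1.toSet := by
  refine ⟨Set.nonempty_iff_ne_empty.2 fun h => p.2.1 ?_, ?_⟩
  · rw [le_iff_toSet_subset, h]
    exact Set.empty_subset _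
  · rw [isPreirreducible_iff_isClosed_union_isClosed]
    intro s t hs ht hst
    by_contra! h
    exact p.2.2 (toDual ⟨s, hs⟩) (toDual ⟨t, ht⟩) h.1 h.2 (by rwa [le_iff_toSet_subset, toSet_mul])

end Cl

section Adjunction

variable {R X : Type*} [CompleteLattice R] [CommMonoid R] [TopologicalSpace X]

lemma isHom_iff_forall_isPrimeDownSet {h : R → Cl X} :
    IsHom h ↔ ∀ x, IsPrimeDownSet {a | x ∈ (h a).toSet} := by
  have hsSup (S : Set R) : (sSup (h '' S)).toSet = ⋂ a ∈ S, (h a).toSet := by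
    rw [Cl.toSet_sSup, Set.biInter_image]
  simp only [IsHom, ← Cl.toSet_injective.eq_iff, hsSup, Cl.toSet_mul, Cl.toSet_one, Set.ext_iff,
    Set.mem_iInter₂, Set.mem_union, Set.mem_empty_iff_false, iff_false]
  constructor
  · rintro ⟨hsup, hmul, hone⟩ x
    exact ⟨fun S => hsup S x, fun a b => hmul a b x, hone x⟩
  · intro hD
    exact ⟨fun S x => (hD x).sSup_mem_iff S, fun a b x => (hD x).mul_mem_iff a b,
      fun x => (hD x).one_notMem⟩

lemma continuous_of_isClosed_preimage_Vset {f : X → SpecT R}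
    (hf : ∀ a, IsClosed (f ⁻¹' Vset a)) : Continuous f := by
  rw [continuous_generateFrom_iff]
  rintro _ ⟨a, rfl⟩
  exact (hf a).isOpen_compl

lemma isHom_specMap (hdist : ∀ (a : R) (S : Set R), a * sSup S = ⨆ b ∈ S, a * b)
    (h1 : (1 : R) = ⊤) (g : C(X, SpecT R)) : IsHom (specMap g) :=
  isHom_iff_forall_isPrimeDownSet.2 fun x => isPrimeDownSet_Iic hdist h1 (g x)

lemma specMap_injective : Function.Injective (specMap (R := R) (X := X)) := by
  intro g g' hgg'
  ext x : 1
  exact Subtype.ext <| eq_of_forall_le_iff fun a =>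
    Set.ext_iff.1 (congrArg Cl.toSet (congrFun hgg' a)) x

lemma exists_specMap_eq {h : R → Cl X} (hh : IsHom h) : ∃ g : C(X, SpecT R), specMap g = h := by
  have hD := isHom_iff_forall_isPrimeDownSet.1 hh
  have hcont : Continuous fun x => (hD x).point :=
    continuous_of_isClosed_preimage_Vset fun a => by
      convert (h a).isClosed_toSet using 1
      ext x
      exact (hD x).le_point_iff
  exact ⟨⟨_, hcont⟩, funext fun a => Cl.toSet_injective <| Set.ext fun x => (hD x).le_point_iff⟩

end Adjunction

namespace Cl

variable {X : Type*} [TopologicalSpace X]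

def counit (x : X) : SpecT (Cl X) := (isPrimeDownSet_setOf_mem x).point

lemma le_counit_iff {x : X} {u : Cl X} : u ≤ (counit x).1 ↔ x ∈ u.toSet :=
  (isPrimeDownSet_setOf_mem x).le_point_iff

lemma toSet_counit (x : X) : (counit x).1.toSet = closure {x} := by
  have : (counit x).1 = toDual ⟨closure {x}, isClosed_closure⟩ := eq_of_forall_le_iff fun u => by
    rw [le_counit_iff, le_iff_toSet_subset]
    exact ((isClosed_toSet u).closure_subset_iff.trans Set.singleton_subset_iff).symm
  rw [this]
  rfl

lemma counit_bijective [QuasiSober X] [T0Space X] : Function.Bijective (counit (X := X)) := by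
  refine ⟨fun x y hxy => ?_, fun p => ?_⟩
  · refine (inseparable_iff_closure_eq.2 ?_).eq
    rw [← toSet_counit, ← toSet_counit, hxy]
  · obtain ⟨x, hx⟩ := QuasiSober.sober (isIrreducible_toSet p) (isClosed_toSet p.1)
    exact ⟨x, Subtype.ext <| toSet_injective <| (toSet_counit x).trans hx⟩

lemma counit_preimage_Vset (u : Cl X) : counit ⁻¹' Vset u = u.toSet :=
  Set.ext fun _ => le_counit_iff

lemma continuous_counit : Continuous (counit (X := X)) :=
  continuous_of_isClosed_preimage_Vset fun u => counit_preimage_Vset u ▸ isClosed_toSet u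

lemma isClosedMap_counit [QuasiSober X] [T0Space X] : IsClosedMap (counit (X := X)) := by
  intro s hs
  have hV : counit ⁻¹' Vset (toDual ⟨s, hs⟩ : Cl X) = s := counit_preimage_Vset _
  rw [← hV, Set.image_preimage_eq _ counit_bijective.2]
  exact isClosed_Vset _

noncomputable def counitHomeomorph [QuasiSober X] [T0Space X] : X ≃ₜ SpecT (Cl X) :=
  (Equiv.ofBijective _ counit_bijective).toHomeomorphOfContinuousClosed continuous_counit
    isClosedMap_counit

end Cl

/-- `Spec : IRng† → Sob^op` is left adjoint to the closed-set functor
`C : Sob^op → IRng†`: for a complete idealic semiring `R` and a sober space `X`,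
`g ↦ (a ↦ g⁻¹(V a))` is a bijection from continuous maps `X → Spec R` onto
homomorphisms `R → C(X)`; the unit `a ↦ V(a)` is a homomorphism `R → C(Spec R)`,
and the counit `x ↦ closure {x} : X → Spec C(X)` is a homeomorphism. -/
theorem stmt12 {R X : Type*} [CompleteLattice R] [CommMonoid R]
    (hdist : ∀ (a : R) (S : Set R), a * sSup S = ⨆ b ∈ S, a * b)
    (h1 : (1 : R) = ⊤)
    [TopologicalSpace X] [QuasiSober X] [T0Space X] :
    (∀ g : C(X, SpecT R), IsHom (specMap g)) ∧
    Function.Injective (specMap (R := R) (X := X)) ∧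
    (∀ h : R → Cl X, IsHom h → ∃ g : C(X, SpecT R), specMap g = h) ∧
    IsHom (fun a : R =>
      OrderDual.toDual (⟨Vset a, isClosed_Vset a⟩ : TopologicalSpace.Closeds (SpecT R))) ∧
    ∃ e : X ≃ₜ SpecT (Cl X),
      ∀ x : X, ((OrderDual.ofDual (e x).1 : TopologicalSpace.Closeds X) : Set X)
        = closure {x} :=
  ⟨isHom_specMap hdist h1, specMap_injective, fun _ => exists_specMap_eq,
    isHom_specMap hdist h1 (ContinuousMap.id _), Cl.counitHomeomorph, Cl.toSet_counit⟩
end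

section
/- Let R be an algebraic complete idealic semiring (every element is a sup of compact elements, 1 is compact, and products of compact elements are compact), and let X = Spec R. An open subset U ⊆ X is quasi-compact if and only if U = D(a) := X \ V(a) for some compact element a of R. -/
/-!
`D(a) ∩ D(b) = D(ab)`, so the sets `D(a)` form a basis of `Spec R`, and by algebraicity so do the
`D(c)` with `c` compact. Each such `D(c)` is quasi-compact: by Alexander's subbasis theorem it
suffices to treat covers `D(c) ⊆ ⋃ᵢ D(bᵢ) = D(⨆ᵢ bᵢ)`. Then some power `cⁿ` lies below `⨆ᵢ bᵢ`
(otherwise Zorn, applied with the compactness of the powers of `c`, gives an element above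
`⨆ᵢ bᵢ` maximal among those avoiding all powers of `c`, and it is a prime not above `c`); being
compact, `cⁿ` lies below a finite subsupremum, and `D(cⁿ) = D(c)`. Hence the quasi-compact opens
are the finite unions of the `D(cᵢ)`, that is, the sets `D(⨆ᵢ cᵢ)`.
-/

open CompleteLattice

open TopologicalSpace

lemma exists_maximal_forall_not_le {R : Type*} [CompleteLattice R] {M : Set R}
    (hM : ∀ m ∈ M, IsCompactElement m) {s : R} (hs : ∀ m ∈ M, ¬ m ≤ s) :
    ∃ q, s ≤ q ∧ Maximal (fun x => ∀ m ∈ M, ¬ m ≤ x) q := by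
  refine zorn_le_nonempty₀ {x | ∀ m ∈ M, ¬ m ≤ x} ?_ s hs
  intro c hc hchain y hy
  refine ⟨sSup c, fun m hm hle => ?_, fun z hz => le_sSup hz⟩
  obtain ⟨x, hxc, hmx⟩ := (isCompactElement_iff_le_of_directed_sSup_le R m).mp (hM m hm) c
    ⟨y, hy⟩ hchain.directedOn hle
  exact hc hxc m hm hmx

def Dset {R : Type*} [LE R] [Mul R] [One R] (a : R) : Set (SpecT R) := (Vset a)ᶜ

section

variable {R : Type*} [CommMonoid R] [CompleteLattice R]

@[simp]
lemma mem_Dset {a : R} {p : SpecT R} : p ∈ Dset a ↔ ¬ a ≤ p.1 := Iff.rfl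

lemma Dset_mono {a b : R} (h : a ≤ b) : Dset a ⊆ Dset b :=
  fun _ hpa hpb => hpa (h.trans hpb)

lemma Dset_iSup {ι : Sort*} (f : ι → R) : Dset (⨆ i, f i) = ⋃ i, Dset (f i) := by
  ext p
  simp [iSup_le_iff]

lemma Dset_finsetSup {ι : Type*} (t : Finset ι) (f : ι → R) :
    Dset (t.sup f) = ⋃ i ∈ t, Dset (f i) := by
  ext p
  simp [Finset.sup_le_iff]

lemma isOpen_Dset (a : R) : IsOpen (Dset a) :=
  GenerateOpen.basic _ ⟨a, rfl⟩

lemma exists_isCompactElement_mem_Dset [IsCompactlyGenerated R] {b : R} {p : SpecT R}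
    (hp : p ∈ Dset b) : ∃ c, IsCompactElement c ∧ c ≤ b ∧ p ∈ Dset c := by
  simpa [le_iff_compact_le_imp (a := b)] using hp

lemma isCompactElement_pow_succ
    (hmulcpt : ∀ a b : R, IsCompactElement a → IsCompactElement b → IsCompactElement (a * b))
    {a : R} (ha : IsCompactElement a) (n : ℕ) : IsCompactElement (a ^ (n + 1)) := by
  induction n with
  | zero => simpa using ha
  | succ n ih => exact pow_succ a (n + 1) ▸ hmulcpt _ _ ih ha

variable [IsQuantale R]

lemma mul_le_left_of_one_eq_top (h1 : (1 : R) = ⊤) (a b : R) : a * b ≤ a :=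
  mul_le_of_le_one_right' (h1 ▸ le_top)

lemma mul_le_right_of_one_eq_top (h1 : (1 : R) = ⊤) (a b : R) : a * b ≤ b :=
  mul_le_of_le_one_left' (h1 ▸ le_top)

lemma sup_mul_sup_le (h1 : (1 : R) = ⊤) (q x y : R) : (q ⊔ x) * (q ⊔ y) ≤ q ⊔ x * y := by
  rw [Quantale.sup_mul_distrib, Quantale.mul_sup_distrib, Quantale.mul_sup_distrib]
  refine sup_le (sup_le (le_sup_of_le_left ?_) (le_sup_of_le_left ?_))
    (sup_le (le_sup_of_le_left ?_) le_sup_right)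
  exacts [mul_le_left_of_one_eq_top h1 q q, mul_le_left_of_one_eq_top h1 q y,
    mul_le_right_of_one_eq_top h1 x q]

lemma Dset_mul (h1 : (1 : R) = ⊤) (a b : R) : Dset (a * b) = Dset a ∩ Dset b := by
  ext p
  refine ⟨fun hp => ⟨?_, ?_⟩, fun ⟨hpa, hpb⟩ => p.2.2 a b hpa hpb⟩
  · exact Dset_mono (mul_le_left_of_one_eq_top h1 a b) hp
  · exact Dset_mono (mul_le_right_of_one_eq_top h1 a b) hp

lemma Dset_pow_succ (h1 : (1 : R) = ⊤) (a : R) (n : ℕ) : Dset (a ^ (n + 1)) = Dset a := by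
  induction n with
  | zero => rw [zero_add, pow_one]
  | succ n ih => rw [pow_succ, Dset_mul h1, ih, Set.inter_self]

lemma isTopologicalBasis_range_Dset (h1 : (1 : R) = ⊤) :
    IsTopologicalBasis (Set.range (Dset : R → Set (SpecT R))) where
  exists_subset_inter := by
    rintro _ ⟨a, rfl⟩ _ ⟨b, rfl⟩ p hp
    exact ⟨Dset (a * b), ⟨a * b, rfl⟩, (Dset_mul h1 a b).symm ▸ hp, (Dset_mul h1 a b).le⟩
  sUnion_eq := Set.eq_univ_of_forall fun p => ⟨Dset 1, ⟨1, rfl⟩, p.2.1⟩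
  eq_generateFrom := congrArg generateFrom (Set.ext fun _ => exists_congr fun _ => eq_comm)

lemma isTopologicalBasis_Dset_isCompactElement [IsCompactlyGenerated R] (h1 : (1 : R) = ⊤) :
    IsTopologicalBasis (Set.range fun c : {c : R // IsCompactElement c} => Dset c.1) := by
  refine isTopologicalBasis_of_isOpen_of_nhds (by rintro _ ⟨c, rfl⟩; exact isOpen_Dset _) ?_
  intro p U hpU hU
  obtain ⟨_, ⟨b, rfl⟩, hpb, hbU⟩ := (isTopologicalBasis_range_Dset h1).exists_subset_of_mem_open
    hpU hU
  obtain ⟨c, hc, hcb, hpc⟩ := exists_isCompactElement_mem_Dset hpb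
  exact ⟨Dset c, ⟨⟨c, hc⟩, rfl⟩, hpc, (Dset_mono hcb).trans hbU⟩

lemma isPrimeElt_of_maximal_forall_not_le (h1 : (1 : R) = ⊤) {M : Set R} (hne : M.Nonempty)
    (hmul : ∀ x ∈ M, ∀ y ∈ M, x * y ∈ M) {q : R}
    (hq : Maximal (fun x => ∀ m ∈ M, ¬ m ≤ x) q) : IsPrimeElt q := by
  have hsup : ∀ x, ¬ x ≤ q → ∃ m ∈ M, m ≤ q ⊔ x := fun x hx => by
    by_contra! h
    exact hx (le_sup_right.trans (hq.2 h le_sup_left))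
  refine ⟨fun h1q => ?_, fun x y hx hy hxy => ?_⟩
  · obtain ⟨m, hm⟩ := hne
    exact hq.1 m hm (le_top.trans (h1 ▸ h1q))
  · obtain ⟨m, hm, hmx⟩ := hsup x hx
    obtain ⟨m', hm', hmy⟩ := hsup y hy
    refine hq.1 _ (hmul m hm m' hm') ?_
    calc m * m' ≤ (q ⊔ x) * (q ⊔ y) := mul_le_mul' hmx hmy
      _ ≤ q ⊔ x * y := sup_mul_sup_le h1 q x y
      _ = q := sup_eq_left.mpr hxy

lemma exists_pow_succ_le_of_Dset_subset (h1 : (1 : R) = ⊤)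
    (hmulcpt : ∀ a b : R, IsCompactElement a → IsCompactElement b → IsCompactElement (a * b))
    {a s : R} (ha : IsCompactElement a) (h : Dset a ⊆ Dset s) : ∃ n : ℕ, a ^ (n + 1) ≤ s := by
  by_contra! hs
  set M := Set.range fun n : ℕ => a ^ (n + 1)
  have hmul : ∀ x ∈ M, ∀ y ∈ M, x * y ∈ M := by
    rintro _ ⟨n, rfl⟩ _ ⟨k, rfl⟩
    exact ⟨n + 1 + k, by dsimp only; rw [← pow_add, add_assoc]⟩
  obtain ⟨q, hsq, hq⟩ := exists_maximal_forall_not_le (M := M)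
    (by rintro _ ⟨n, rfl⟩; exact isCompactElement_pow_succ hmulcpt ha n)
    (by rintro _ ⟨n, rfl⟩; exact hs n)
  have hprime : IsPrimeElt q :=
    isPrimeElt_of_maximal_forall_not_le h1 (Set.range_nonempty _) hmul hq
  have haq : a ≤ q := by
    by_contra haq
    exact h (show (⟨q, hprime⟩ : SpecT R) ∈ Dset a from haq) hsq
  exact hq.1 (a ^ (0 + 1)) ⟨0, rfl⟩ (by rwa [zero_add, pow_one])

lemma isCompact_Dset (h1 : (1 : R) = ⊤)
    (hmulcpt : ∀ a b : R, IsCompactElement a → IsCompactElement b → IsCompactElement (a * b))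
    {a : R} (ha : IsCompactElement a) : IsCompact (Dset a) := by
  refine isCompact_generateFrom' rfl fun ι U hU => ?_
  choose b hb using fun i => (U i).2
  have hUb : ∀ i, (U i : Set (SpecT R)) = Dset (b i) := hb
  simp only [hUb, ← Dset_iSup] at hU ⊢
  obtain ⟨n, hn⟩ := exists_pow_succ_le_of_Dset_subset h1 hmulcpt ha hU
  obtain ⟨J, hJ⟩ := (isCompactElement_pow_succ hmulcpt ha n).exists_finset_of_le_iSup R b hn
  refine ⟨J, J.finite_toSet, ?_⟩
  rw [← Dset_pow_succ h1 a n]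
  simpa only [Finset.mem_coe] using Dset_mono hJ

end

theorem stmt14_general {R : Type*} [CompleteLattice R] [CommMonoid R]
    (hdist : ∀ (a : R) (S : Set R), a * sSup S = ⨆ b ∈ S, a * b)
    (h1 : (1 : R) = ⊤)
    (halg : ∀ a : R, a = sSup {x : R | IsCompactElement x ∧ x ≤ a})
    (hmulcpt : ∀ a b : R, IsCompactElement a → IsCompactElement b → IsCompactElement (a * b))
    (U : Set (SpecT R)) (hU : IsOpen U) :
    IsCompact U ↔ ∃ a : R, IsCompactElement a ∧ U = (Vset a)ᶜ := by
  have : IsQuantale R := ⟨hdist, fun S x => by simp only [mul_comm _ x, hdist]⟩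
  have : IsCompactlyGenerated R := ⟨fun a => ⟨_, fun _ hx => hx.1, (halg a).symm⟩⟩
  constructor
  · intro hUc
    obtain ⟨s, hs, rfl⟩ := (isCompact_open_iff_eq_finite_iUnion_of_isTopologicalBasis _
      (isTopologicalBasis_Dset_isCompactElement h1) (fun c => isCompact_Dset h1 hmulcpt c.2)
      U).mp ⟨hUc, hU⟩
    obtain ⟨t, rfl⟩ := hs.exists_finset_coe
    exact ⟨t.sup Subtype.val, isCompactElement_finsetSup t fun c _ => c.2,
      (Dset_finsetSup t _).symm⟩
  · rintro ⟨a, ha, rfl⟩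
    exact isCompact_Dset h1 hmulcpt ha

/-- Let `R` be an algebraic complete idealic semiring and `X = Spec R`.
An open `U ⊆ X` is quasi-compact iff `U = D(a) = X \ V(a)` for some compact `a ∈ R`. -/
theorem stmt14 {R : Type*} [CompleteLattice R] [CommMonoid R]
    (hdist : ∀ (a : R) (S : Set R), a * sSup S = ⨆ b ∈ S, a * b)
    (h1 : (1 : R) = ⊤)
    (halg : ∀ a : R, a = sSup {x : R | IsCompactElement x ∧ x ≤ a})
    (htop : IsCompactElement (1 : R))
    (hmulcpt : ∀ a b : R, IsCompactElement a → IsCompactElement b → IsCompactElement (a * b))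
    (U : Set (SpecT R)) (hU : IsOpen U) :
    IsCompact U ↔ ∃ a : R, IsCompactElement a ∧ U = (Vset a)ᶜ :=
  stmt14_general hdist h1 halg hmulcpt U hU
end

section
/- Let R be an algebraic complete idealic semiring and a, b ∈ R. The following are equivalent: (i) for every compact x ≤ a there exists n ∈ ℕ with xⁿ ≤ b; (ii) √a ≤ √b, where √a = sup { x | xⁿ ≤ a for some n ≥ 1 }; (iii) V(a) ⊇ V(b) in Spec R, i.e., every prime p ≥ b satisfies p ≥ a. -/
/-!
(i) ⇒ (ii): if `yⁿ ≤ a` and `c ≤ y` is compact, then `cⁿ` is a compact element below `a`, so some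
power of it lies below `b`. (ii) ⇒ (iii) because a prime above `b` lies above `√b`.
(iii) ⇒ (i) is Krull's argument: if no power of the compact element `x` lies below `b`, then,
since all powers of `x` are compact, Zorn's lemma gives an element `p ≥ b` maximal among those
lying above no power of `x`; such a `p` is prime, and `x ≰ p` forces `a ≰ p`.
-/

open CompleteLattice

def radical {R : Type*} [CompleteLattice R] [Monoid R] (a : R) : R :=
  sSup {x : R | ∃ n : ℕ, 1 ≤ n ∧ x ^ n ≤ a}

theorem IsPrimeElt.not_pow_le {R : Type*} [Monoid R] [LE R] {p x : R} (hp : IsPrimeElt p)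
    (hx : ¬ x ≤ p) (n : ℕ) : ¬ x ^ n ≤ p := by
  induction n with
  | zero => simpa using hp.1
  | succ n ih => rw [pow_succ]; exact hp.2 _ _ ih hx

section Monoid

variable {R : Type*} [Monoid R] [CompleteLattice R]

theorem le_radical (a : R) : a ≤ radical a :=
  le_sSup ⟨1, le_rfl, (pow_one a).le⟩

theorem IsPrimeElt.radical_le {p b : R} (hp : IsPrimeElt p) (hbp : b ≤ p) : radical b ≤ p :=
  sSup_le fun _ ⟨n, _, hxn⟩ => not_not.mp fun hx => hp.not_pow_le hx n (hxn.trans hbp)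

theorem isCompactElement_pow (htop : IsCompactElement (1 : R))
    (hmulcpt : ∀ a b : R, IsCompactElement a → IsCompactElement b → IsCompactElement (a * b))
    {x : R} (hx : IsCompactElement x) (n : ℕ) : IsCompactElement (x ^ n) := by
  induction n with
  | zero => simpa using htop
  | succ n ih => rw [pow_succ]; exact hmulcpt _ _ ih hx

theorem exists_maximal_forall_pow_not_le {x b : R} (hx : ∀ n : ℕ, IsCompactElement (x ^ n))
    (hxb : ∀ n : ℕ, ¬ x ^ n ≤ b) :
    ∃ p, b ≤ p ∧ Maximal (fun q => b ≤ q ∧ ∀ n : ℕ, ¬ x ^ n ≤ q) p := by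
  refine zorn_le_nonempty₀ _ (fun c hcS hchain y hy => ?_) b ⟨le_rfl, hxb⟩
  refine ⟨sSup c, ⟨(hcS hy).1.trans (le_sSup hy), fun n hn => ?_⟩, fun z hz => le_sSup hz⟩
  obtain ⟨z, hzc, hz⟩ := (isCompactElement_iff_le_of_directed_sSup_le R (x ^ n)).mp (hx n) c ⟨y, hy⟩
    hchain.directedOn hn
  exact (hcS hzc).2 n hz

end Monoid

section Quantale

variable {R : Type*} [CommMonoid R] [CompleteLattice R] [IsQuantale R]

theorem sup_mul_sup_le_s16 (h1 : (1 : R) = ⊤) (p c d : R) : (p ⊔ c) * (p ⊔ d) ≤ p ⊔ c * d := by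
  have hmul_le : ∀ x y : R, x * y ≤ x := fun x y =>
    mul_le_of_le_one_right' (h1 ▸ le_top)
  rw [Quantale.sup_mul_distrib, Quantale.mul_sup_distrib, Quantale.mul_sup_distrib]
  refine sup_le (sup_le ((hmul_le p p).trans le_sup_left) ((hmul_le p d).trans le_sup_left))
    (sup_le ?_ le_sup_right)
  rw [mul_comm]
  exact (hmul_le p c).trans le_sup_left

theorem isPrimeElt_of_maximal (h1 : (1 : R) = ⊤) {x b p : R}
    (hp : Maximal (fun q => b ≤ q ∧ ∀ n : ℕ, ¬ x ^ n ≤ q) p) : IsPrimeElt p := by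
  refine ⟨by simpa using hp.1.2 0, fun c d hc hd hcd => ?_⟩
  have hpow_le_sup : ∀ e : R, ¬ e ≤ p → ∃ m : ℕ, x ^ m ≤ p ⊔ e := fun e he => by
    by_contra! h
    exact he (le_sup_right.trans (hp.2 ⟨hp.1.1.trans le_sup_left, h⟩ le_sup_left))
  obtain ⟨m, hm⟩ := hpow_le_sup c hc
  obtain ⟨k, hk⟩ := hpow_le_sup d hd
  refine hp.1.2 (m + k) ?_
  calc x ^ (m + k) = x ^ m * x ^ k := pow_add x m k
    _ ≤ (p ⊔ c) * (p ⊔ d) := mul_le_mul' hm hk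
    _ ≤ p ⊔ c * d := sup_mul_sup_le_s16 h1 p c d
    _ ≤ p := sup_le le_rfl hcd

theorem exists_isPrimeElt_forall_pow_not_le (h1 : (1 : R) = ⊤) {x b : R}
    (hx : ∀ n : ℕ, IsCompactElement (x ^ n)) (hxb : ∀ n : ℕ, ¬ x ^ n ≤ b) :
    ∃ p, IsPrimeElt p ∧ b ≤ p ∧ ¬ x ≤ p := by
  obtain ⟨p, hbp, hp⟩ := exists_maximal_forall_pow_not_le hx hxb
  exact ⟨p, isPrimeElt_of_maximal h1 hp, hbp, by simpa using hp.1.2 1⟩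

theorem radical_le_radical_of_forall_compact [IsCompactlyGenerated R] (h1 : (1 : R) = ⊤)
    (htop : IsCompactElement (1 : R))
    (hmulcpt : ∀ a b : R, IsCompactElement a → IsCompactElement b → IsCompactElement (a * b))
    {a b : R} (h : ∀ x : R, IsCompactElement x → x ≤ a → ∃ n : ℕ, x ^ n ≤ b) :
    radical a ≤ radical b := by
  refine sSup_le fun y ⟨n, _, hyn⟩ => le_iff_compact_le_imp.mpr fun c hc hcy => ?_
  obtain ⟨m, hm⟩ :=
    h (c ^ n) (isCompactElement_pow htop hmulcpt hc n) ((pow_le_pow_left' hcy n).trans hyn)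
  refine le_sSup ⟨n * m + 1, le_add_self, ?_⟩
  calc c ^ (n * m + 1) ≤ c ^ (n * m) := pow_le_pow_right_of_le_one' (h1 ▸ le_top) (Nat.le_succ _)
    _ = (c ^ n) ^ m := pow_mul c n m
    _ ≤ b := hm

theorem exists_pow_le_of_forall_isPrimeElt (h1 : (1 : R) = ⊤) (htop : IsCompactElement (1 : R))
    (hmulcpt : ∀ a b : R, IsCompactElement a → IsCompactElement b → IsCompactElement (a * b))
    {a b : R} (h : ∀ p : R, IsPrimeElt p → b ≤ p → a ≤ p) (x : R) (hx : IsCompactElement x)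
    (hxa : x ≤ a) : ∃ n : ℕ, x ^ n ≤ b := by
  by_contra! hxb
  obtain ⟨p, hp, hbp, hxp⟩ :=
    exists_isPrimeElt_forall_pow_not_le h1 (isCompactElement_pow htop hmulcpt hx) hxb
  exact hxp (hxa.trans (h p hp hbp))

end Quantale

/-- In an algebraic complete idealic semiring, for `a b : R` the following
are equivalent: (i) every compact `x ≤ a` has `xⁿ ≤ b` for some `n`; (ii) `√a ≤ √b`
where `√a = sup {x | xⁿ ≤ a for some n ≥ 1}`; (iii) every prime `p ≥ b` satisfies
`p ≥ a` (i.e. `V(a) ⊇ V(b)`). -/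
theorem stmt16 {R : Type*} [CompleteLattice R] [CommMonoid R]
    (hdist : ∀ (a : R) (S : Set R), a * sSup S = ⨆ b ∈ S, a * b)
    (h1 : (1 : R) = ⊤)
    (halg : ∀ a : R, a = sSup {x : R | IsCompactElement x ∧ x ≤ a})
    (htop : IsCompactElement (1 : R))
    (hmulcpt : ∀ a b : R, IsCompactElement a → IsCompactElement b → IsCompactElement (a * b))
    (a b : R) :
    ((∀ x : R, IsCompactElement x → x ≤ a → ∃ n : ℕ, x ^ n ≤ b) ↔
      sSup {x : R | ∃ n : ℕ, 1 ≤ n ∧ x ^ n ≤ a} ≤ sSup {x : R | ∃ n : ℕ, 1 ≤ n ∧ x ^ n ≤ b}) ∧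
    ((∀ x : R, IsCompactElement x → x ≤ a → ∃ n : ℕ, x ^ n ≤ b) ↔
      ∀ p : R, IsPrimeElt p → b ≤ p → a ≤ p) := by
  have : IsQuantale R := ⟨hdist, fun s y => by simpa only [mul_comm] using hdist y s⟩
  have : IsCompactlyGenerated R := ⟨fun x => ⟨_, fun _ hc => hc.1, (halg x).symm⟩⟩
  have i_ii := radical_le_radical_of_forall_compact h1 htop hmulcpt (a := a) (b := b)
  have ii_iii : radical a ≤ radical b → ∀ p : R, IsPrimeElt p → b ≤ p → a ≤ p :=
    fun h p hp hbp => (le_radical a).trans (h.trans (hp.radical_le hbp))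
  have iii_i := exists_pow_le_of_forall_isPrimeElt h1 htop hmulcpt (a := a) (b := b)
  exact ⟨⟨i_ii, fun h => iii_i (ii_iii h)⟩, ⟨fun h => ii_iii (i_ii h), iii_i⟩⟩
end

section
/- Patching lemma: Let R be an algebraic complete idealic semiring, and s, s₁, …, sₙ compact elements with s = s₁ + ⋯ + sₙ (join). Write R_t for the localization of R at the multiplicative system {tᵏ}, i.e., the quotient by the congruence generated by (1, t). If f_i ∈ R_{s_i} satisfy f_i = f_j in R_{s_i s_j} for all i, j, then there exists a unique f ∈ R_s with f = f_i in R_{s_i} for all i. -/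
/-!
Equality in `R_t` is detected on compact elements: `a = b` in `R_t` iff every compact `x ≤ a`
has `tᵏ x ≤ b` for some `k`, and symmetrically. The glued element is the meet
`g = ⨅ j, (fⱼ : sⱼ^∞)` of the saturations `(b : t^∞) = sSup {x | ∃ k, tᵏ x ≤ b}`. Compatibility
in `R_{sᵢsⱼ}` lets a power of `sᵢ` push each compact `x ≤ fᵢ` below every saturation
`(fⱼ : sⱼ^∞)`, and finiteness of the index set makes one power work for all `j`. For uniqueness,
an element agreeing with `g` in every `R_{sᵢ}` agrees with it in `R_s`, because
`(a ⊔ c)^(j + k) ≤ aʲ ⊔ cᵏ` turns the powers of the individual `sᵢ` into one power of `s`.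
-/

open CompleteLattice

/-- A congruence relation on a complete semiring: an equivalence relation compatible
with arbitrary suprema and with multiplication. -/
def IsCong {R : Type*} [CompleteLattice R] [Mul R] (r : R → R → Prop) : Prop :=
  Equivalence r ∧
  (∀ S : Set (R × R), (∀ p ∈ S, r p.1 p.2) →
    r (sSup (Prod.fst '' S)) (sSup (Prod.snd '' S))) ∧
  (∀ a b c d : R, r a b → r c d → r (a * c) (b * d))

/-- The congruence relation generated by a set of pairs. -/
def congCl {R : Type*} [CompleteLattice R] [Mul R] (s : Set (R × R)) (a b : R) : Prop :=
  ∀ r : R → R → Prop, IsCong r → (∀ p ∈ s, r p.1 p.2) → r a b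

/-- The congruence defining the localization `R_t` of `R` at `{tᵏ}`: the congruence
generated by the single pair `(1, t)`.  Two elements of `R` become equal in `R_t`
iff they are related by this congruence. -/
def locRel {R : Type*} [CompleteLattice R] [Mul R] [One R] (t : R) (a b : R) : Prop :=
  congCl {((1 : R), t)} a b

open Quantale

section Congruence

variable {R : Type*} [CompleteLattice R] [Mul R] {r : R → R → Prop}

theorem IsCong.sup (hr : IsCong r) {a b c d : R} (hab : r a b) (hcd : r c d) :
    r (a ⊔ c) (b ⊔ d) := by
  have h := hr.2.1 {(a, b), (c, d)} (by rintro p (rfl | rfl) <;> assumption)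
  rwa [Set.image_pair, Set.image_pair, sSup_pair, sSup_pair] at h

theorem IsCong.iSup (hr : IsCong r) {ι : Type*} {u v : ι → R} (h : ∀ i, r (u i) (v i)) :
    r (⨆ i, u i) (⨆ i, v i) := by
  have h' := hr.2.1 (Set.range fun i => (u i, v i)) (by rintro _ ⟨i, rfl⟩; exact h i)
  rwa [← Set.range_comp, ← Set.range_comp, sSup_range, sSup_range] at h'

theorem isCong_congCl (s : Set (R × R)) : IsCong (congCl s) :=
  ⟨⟨fun _ _ hr _ => hr.1.refl _, fun h _ hr hs => hr.1.symm (h _ hr hs),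
      fun h h' _ hr hs => hr.1.trans (h _ hr hs) (h' _ hr hs)⟩,
    fun _ hS _ hr hs => hr.2.1 _ fun p hp => hS p hp _ hr hs,
    fun _ _ _ _ hab hcd _ hr hs => hr.2.2 _ _ _ _ (hab _ hr hs) (hcd _ hr hs)⟩

end Congruence

section Monoid

variable {R : Type*} [CompleteLattice R] [Monoid R]

theorem IsCong.pow_mul {r : R → R → Prop} (hr : IsCong r) {t : R} (h1t : r 1 t) (k : ℕ)
    (a : R) : r a (t ^ k * a) := by
  induction k with
  | zero => simpa using hr.1.refl a
  | succ k ih =>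
    have h := hr.2.2 _ _ _ _ h1t (hr.1.refl (t ^ k * a))
    rw [one_mul, ← mul_assoc, ← pow_succ'] at h
    exact hr.1.trans ih h

theorem isCompactElement_pow_mul
    (hmul : ∀ a b : R, IsCompactElement a → IsCompactElement b → IsCompactElement (a * b))
    {t x : R} (ht : IsCompactElement t) (hx : IsCompactElement x) (k : ℕ) :
    IsCompactElement (t ^ k * x) := by
  induction k with
  | zero => rwa [pow_zero, one_mul]
  | succ k ih => rw [pow_succ', mul_assoc]; exact hmul _ _ ht ih

/-- `a ≤ b` in the localization `R_t`, read off on compact elements. -/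
def LocLE (t a b : R) : Prop :=
  ∀ x, IsCompactElement x → x ≤ a → ∃ k, t ^ k * x ≤ b

def LocEq (t a b : R) : Prop :=
  LocLE t a b ∧ LocLE t b a

def locSat (t b : R) : R :=
  sSup {x | ∃ k, t ^ k * x ≤ b}

theorem LocLE.refl (t a : R) : LocLE t a a :=
  fun _ _ hx => ⟨0, by rwa [pow_zero, one_mul]⟩

theorem LocEq.symm {t a b : R} (h : LocEq t a b) : LocEq t b a :=
  ⟨h.2, h.1⟩

theorem locLE_self_one (h1 : (1 : R) = ⊤) (t : R) : LocLE t t 1 :=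
  fun _ _ _ => ⟨0, by rw [pow_zero, one_mul]; exact le_top.trans_eq h1.symm⟩

theorem locRel_sup_of_locLE [IsCompactlyGenerated R] {t a b : R} (hba : LocLE t b a) :
    locRel t (a ⊔ b) a := by
  have hr := isCong_congCl {((1 : R), t)}
  have h1t : locRel t 1 t := fun _ _ h => h _ rfl
  choose k hk using fun y : {y | IsCompactElement y ∧ y ≤ b} => hba y y.2.1 y.2.2
  have hb : locRel t b (⨆ y, t ^ k y * y) := by
    have h := hr.iSup fun y => hr.pow_mul h1t (k y) (y : R)
    rwa [← sSup_eq_iSup', sSup_compact_le_eq] at h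
  have h := hr.sup (hr.1.refl a) hb
  rwa [sup_eq_left.2 (iSup_le hk)] at h

theorem locRel_of_locEq [IsCompactlyGenerated R] {t a b : R} (h : LocEq t a b) :
    locRel t a b := by
  have hr := isCong_congCl {((1 : R), t)}
  exact hr.1.trans (hr.1.symm (locRel_sup_of_locLE h.2))
    (sup_comm a b ▸ locRel_sup_of_locLE h.1)

end Monoid

section Quantale

variable {R : Type*} [CompleteLattice R] [Monoid R] [IsQuantale R]

theorem pow_mul_le_of_le (h1 : (1 : R) = ⊤) {t x b : R} {k m : ℕ} (hkm : k ≤ m)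
    (h : t ^ k * x ≤ b) : t ^ m * x ≤ b :=
  (mul_le_mul_left (pow_le_pow_right_of_le_one' (le_top.trans_eq h1.symm) hkm) x).trans h

theorem exists_pow_mul_sup_le (h1 : (1 : R) = ⊤) {t x y b : R} (hx : ∃ k, t ^ k * x ≤ b)
    (hy : ∃ k, t ^ k * y ≤ b) : ∃ k, t ^ k * (x ⊔ y) ≤ b := by
  obtain ⟨j, hj⟩ := hx
  obtain ⟨k, hk⟩ := hy
  refine ⟨j + k, ?_⟩
  rw [mul_sup_distrib]
  exact sup_le (pow_mul_le_of_le h1 (Nat.le_add_right j k) hj)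
    (pow_mul_le_of_le h1 (Nat.le_add_left k j) hk)

theorem exists_pow_mul_le_of_le_sSup (h1 : (1 : R) = ⊤) {t x b : R} {Y : Set R}
    (hY : ∀ y ∈ Y, ∃ k, t ^ k * y ≤ b) (hx : IsCompactElement x) (hxY : x ≤ sSup Y) :
    ∃ k, t ^ k * x ≤ b := by
  obtain ⟨F, hFY, hxF⟩ := (isCompactElement_iff_exists_le_sSup_of_le_sSup (k := x)).1 hx Y hxY
  obtain ⟨k, hk⟩ : ∃ k, t ^ k * F.sup id ≤ b :=
    Finset.sup_induction (p := fun u => ∃ k, t ^ k * u ≤ b) ⟨0, by rw [mul_bot]; exact bot_le⟩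
      (fun _ hy _ hz => exists_pow_mul_sup_le h1 hy hz) fun y hy => hY y (hFY hy)
  exact ⟨k, (mul_le_mul_right hxF _).trans hk⟩

theorem sup_pow_add_le (h1 : (1 : R) = ⊤) (a c : R) (j k : ℕ) :
    (a ⊔ c) ^ (j + k) ≤ a ^ j ⊔ c ^ k := by
  have hle (x : R) : x ≤ 1 := le_top.trans_eq h1.symm
  induction hn : j + k generalizing j k with
  | zero => simp_all
  | succ n ih =>
    rcases j with _ | j
    · exact (hle _).trans (pow_zero a ▸ le_sup_left)
    rcases k with _ | k
    · exact (hle _).trans (pow_zero c ▸ le_sup_right)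
    rw [pow_succ', sup_mul_distrib]
    apply sup_le
    · calc a * (a ⊔ c) ^ n ≤ a * (a ^ j ⊔ c ^ (k + 1)) := mul_le_mul_right (ih j _ (by omega)) a
        _ ≤ a ^ (j + 1) ⊔ c ^ (k + 1) := by
          rw [mul_sup_distrib, ← pow_succ']
          exact sup_le_sup_left (mul_le_of_le_one_left' (hle a)) _
    · calc c * (a ⊔ c) ^ n ≤ c * (a ^ (j + 1) ⊔ c ^ k) := mul_le_mul_right (ih _ k (by omega)) c
        _ ≤ a ^ (j + 1) ⊔ c ^ (k + 1) := by
          rw [mul_sup_distrib, ← pow_succ']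
          exact sup_le_sup_right (mul_le_of_le_one_left' (hle c)) _

theorem exists_sup_pow_mul_le (h1 : (1 : R) = ⊤) {a c x b : R} (ha : ∃ k, a ^ k * x ≤ b)
    (hc : ∃ k, c ^ k * x ≤ b) : ∃ k, (a ⊔ c) ^ k * x ≤ b := by
  obtain ⟨j, hj⟩ := ha
  obtain ⟨k, hk⟩ := hc
  refine ⟨j + k, (mul_le_mul_left (sup_pow_add_le h1 a c j k) x).trans ?_⟩
  rw [sup_mul_distrib]
  exact sup_le hj hk

theorem exists_iSup_pow_mul_le {ι : Type*} [Fintype ι] (h1 : (1 : R) = ⊤) {t : ι → R} {x b : R}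
    (h : ∀ i, ∃ k, t i ^ k * x ≤ b) : ∃ k, (⨆ i, t i) ^ k * x ≤ b := by
  rw [← Finset.sup_univ_eq_iSup]
  exact Finset.sup_induction (p := fun u => ∃ k, u ^ k * x ≤ b)
    ⟨1, by rw [pow_one, bot_mul]; exact bot_le⟩
    (fun _ ha _ hc => exists_sup_pow_mul_le h1 ha hc) fun i _ => h i

theorem exists_pow_mul_le_iInf {ι : Type*} [Finite ι] (h1 : (1 : R) = ⊤) {t x : R} {b : ι → R}
    (h : ∀ i, ∃ k, t ^ k * x ≤ b i) : ∃ k, t ^ k * x ≤ ⨅ i, b i := by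
  have hev : ∀ᶠ m in Filter.atTop, ∀ i, t ^ m * x ≤ b i := Filter.eventually_all.2 fun i => by
    obtain ⟨k, hk⟩ := h i
    exact Filter.eventually_atTop.2 ⟨k, fun m hm => pow_mul_le_of_le h1 hm hk⟩
  obtain ⟨k, hk⟩ := hev.exists
  exact ⟨k, le_iInf hk⟩

theorem LocLE.trans [IsCompactlyGenerated R] (h1 : (1 : R) = ⊤)
    (hmul : ∀ a b : R, IsCompactElement a → IsCompactElement b → IsCompactElement (a * b))
    {t a b c : R} (ht : IsCompactElement t) (hab : LocLE t a b) (hbc : LocLE t b c) :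
    LocLE t a c := by
  intro x hx hxa
  obtain ⟨k, hk⟩ := hab x hx hxa
  obtain ⟨m, hm⟩ := exists_pow_mul_le_of_le_sSup h1 (fun y hy => hbc y hy.1 hy.2)
    (isCompactElement_pow_mul hmul ht hx k) (hk.trans (sSup_compact_le_eq b).ge)
  exact ⟨m + k, by rwa [pow_add, mul_assoc]⟩

theorem LocEq.trans [IsCompactlyGenerated R] (h1 : (1 : R) = ⊤)
    (hmul : ∀ a b : R, IsCompactElement a → IsCompactElement b → IsCompactElement (a * b))
    {t a b c : R} (ht : IsCompactElement t) (hab : LocEq t a b) (hbc : LocEq t b c) :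
    LocEq t a c :=
  ⟨hab.1.trans h1 hmul ht hbc.1, hbc.2.trans h1 hmul ht hab.2⟩

theorem LocLE.iSup [IsCompactlyGenerated R] (h1 : (1 : R) = ⊤) {t : R} {ι : Type*}
    {u v : ι → R} (h : ∀ i, LocLE t (u i) (v i)) : LocLE t (⨆ i, u i) (⨆ i, v i) := by
  intro x hx hxu
  refine exists_pow_mul_le_of_le_sSup h1 (Y := {y | ∃ i, IsCompactElement y ∧ y ≤ u i}) ?_ hx
    (hxu.trans (iSup_le fun i => (sSup_compact_le_eq (u i)).ge.trans ?_))
  · rintro y ⟨i, hy, hyu⟩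
    obtain ⟨k, hk⟩ := h i y hy hyu
    exact ⟨k, hk.trans (le_iSup v i)⟩
  · exact sSup_le_sSup fun y hy => ⟨i, hy⟩

theorem locLE_one_self (h1 : (1 : R) = ⊤) (t : R) : LocLE t 1 t :=
  fun x _ _ => ⟨1, by rw [pow_one]; exact mul_le_of_le_one_right' (le_top.trans_eq h1.symm)⟩

theorem locLE_iSup_of_forall {ι : Type*} [Fintype ι] (h1 : (1 : R) = ⊤) {t : ι → R} {a b : R}
    (h : ∀ i, LocLE (t i) a b) : LocLE (⨆ i, t i) a b :=
  fun x hx hxa => exists_iSup_pow_mul_le h1 fun i => h i x hx hxa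

theorem locLE_locSat (h1 : (1 : R) = ⊤) (t b : R) : LocLE t (locSat t b) b :=
  fun _ hx hxb => exists_pow_mul_le_of_le_sSup h1 (fun _ hy => hy) hx hxb

end Quantale

section CommQuantale

variable {R : Type*} [CompleteLattice R] [CommMonoid R] [IsQuantale R]

theorem LocLE.mul [IsCompactlyGenerated R] (h1 : (1 : R) = ⊤) {t a b c d : R}
    (hab : LocLE t a b) (hcd : LocLE t c d) : LocLE t (a * c) (b * d) := by
  intro x hx hxac
  let A := {y | IsCompactElement y ∧ y ≤ a}
  let C := {z | IsCompactElement z ∧ z ≤ c}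
  have hac : a * c ≤ sSup (Set.image2 (· * ·) A C) := by
    rw [← sSup_compact_le_eq a, ← sSup_compact_le_eq c, sSup_mul_distrib]
    refine iSup₂_le fun y hy => ?_
    rw [mul_sSup_distrib]
    exact iSup₂_le fun z hz => le_sSup (Set.mem_image2_of_mem hy hz)
  refine exists_pow_mul_le_of_le_sSup h1 ?_ hx (hxac.trans hac)
  rintro _ ⟨y, ⟨hy, hya⟩, z, ⟨hz, hzc⟩, rfl⟩
  obtain ⟨j, hj⟩ := hab y hy hya
  obtain ⟨k, hk⟩ := hcd z hz hzc
  exact ⟨j + k, by rw [pow_add, mul_mul_mul_comm]; exact mul_le_mul' hj hk⟩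

theorem isCong_locEq [IsCompactlyGenerated R] (h1 : (1 : R) = ⊤)
    (hmul : ∀ a b : R, IsCompactElement a → IsCompactElement b → IsCompactElement (a * b))
    {t : R} (ht : IsCompactElement t) : IsCong (LocEq t) := by
  refine ⟨⟨fun a => ⟨.refl t a, .refl t a⟩, LocEq.symm, LocEq.trans h1 hmul ht⟩, ?_, ?_⟩
  · intro S hS
    simp only [sSup_image']
    exact ⟨.iSup h1 fun p => (hS p p.2).1, .iSup h1 fun p => (hS p p.2).2⟩
  · exact fun _ _ _ _ hab hcd => ⟨hab.1.mul h1 hcd.1, hab.2.mul h1 hcd.2⟩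

theorem locRel_iff_locEq [IsCompactlyGenerated R] (h1 : (1 : R) = ⊤)
    (hmul : ∀ a b : R, IsCompactElement a → IsCompactElement b → IsCompactElement (a * b))
    {t a b : R} (ht : IsCompactElement t) : locRel t a b ↔ LocEq t a b :=
  ⟨fun h => h _ (isCong_locEq h1 hmul ht)
    (by rintro _ rfl; exact ⟨locLE_one_self h1 t, locLE_self_one h1 t⟩), locRel_of_locEq⟩

theorem locEq_iInf_locSat {ι : Type*} [Finite ι] (h1 : (1 : R) = ⊤) {t f : ι → R}
    (hglue : ∀ i j, LocLE (t i * t j) (f i) (f j)) (i : ι) :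
    LocEq (t i) (⨅ j, locSat (t j) (f j)) (f i) := by
  refine ⟨fun x hx hxg => locLE_locSat h1 _ _ x hx (hxg.trans (iInf_le _ i)), fun x hx hxf => ?_⟩
  refine exists_pow_mul_le_iInf h1 fun j => ?_
  obtain ⟨k, hk⟩ := hglue i j x hx hxf
  refine ⟨k, le_sSup ⟨k, ?_⟩⟩
  rwa [← mul_assoc, ← mul_pow, mul_comm (t j)]

end CommQuantale

theorem stmt18_general {R : Type*} [CompleteLattice R] [CommMonoid R]
    (hdist : ∀ (a : R) (S : Set R), a * sSup S = ⨆ b ∈ S, a * b)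
    (h1 : (1 : R) = ⊤)
    (halg : ∀ a : R, a = sSup {x : R | IsCompactElement x ∧ x ≤ a})
    (hmulcpt : ∀ a b : R, IsCompactElement a → IsCompactElement b → IsCompactElement (a * b))
    (n : ℕ) (s : R) (si : Fin n → R)
    (hs : s = ⨆ i, si i)
    (hsicpt : ∀ i, IsCompactElement (si i))
    (f : Fin n → R)
    (hglue : ∀ i j, locRel (si i * si j) (f i) (f j)) :
    ∃ g : R, (∀ i, locRel (si i) g (f i)) ∧
      ∀ g' : R, (∀ i, locRel (si i) g' (f i)) → locRel s g' g := by
  have : IsQuantale R := ⟨hdist, fun S x => by simpa only [mul_comm _ x] using hdist x S⟩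
  have : IsCompactlyGenerated R := ⟨fun a => ⟨_, fun _ hx => hx.1, (halg a).symm⟩⟩
  have hloc {t a b : R} (ht : IsCompactElement t) : locRel t a b ↔ LocEq t a b :=
    locRel_iff_locEq h1 hmulcpt ht
  have hg := locEq_iInf_locSat h1 fun i j =>
    ((hloc (hmulcpt _ _ (hsicpt i) (hsicpt j))).1 (hglue i j)).1
  refine ⟨_, fun i => (hloc (hsicpt i)).2 (hg i), fun g' hg' => ?_⟩
  have hg'g i : LocEq (si i) g' _ :=
    ((hloc (hsicpt i)).1 (hg' i)).trans h1 hmulcpt (hsicpt i) (hg i).symm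
  rw [hs]
  exact locRel_of_locEq ⟨locLE_iSup_of_forall h1 fun i => (hg'g i).1,
    locLE_iSup_of_forall h1 fun i => (hg'g i).2⟩

/-- patching lemma: Let `R` be an algebraic complete idealic semiring and
`s, s₁, …, sₙ` compact elements with `s = s₁ ⊔ ⋯ ⊔ sₙ`.  If elements `fᵢ ∈ R_{sᵢ}`
(given by representatives `f i : R`) satisfy `fᵢ = fⱼ` in `R_{sᵢsⱼ}`, then there is an
`f ∈ R_s` (a representative `g : R`) with `f = fᵢ` in `R_{sᵢ}` for all `i`, and it is
unique as an element of `R_s`. -/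
theorem stmt18 {R : Type*} [CompleteLattice R] [CommMonoid R]
    (hdist : ∀ (a : R) (S : Set R), a * sSup S = ⨆ b ∈ S, a * b)
    (h1 : (1 : R) = ⊤)
    (halg : ∀ a : R, a = sSup {x : R | IsCompactElement x ∧ x ≤ a})
    (htop : IsCompactElement (1 : R))
    (hmulcpt : ∀ a b : R, IsCompactElement a → IsCompactElement b → IsCompactElement (a * b))
    (n : ℕ) (s : R) (si : Fin n → R)
    (hs : s = ⨆ i, si i)
    (hscpt : IsCompactElement s) (hsicpt : ∀ i, IsCompactElement (si i))
    (f : Fin n → R)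
    (hglue : ∀ i j, locRel (si i * si j) (f i) (f j)) :
    ∃ g : R, (∀ i, locRel (si i) g (f i)) ∧
      ∀ g' : R, (∀ i, locRel (si i) g' (f i)) → locRel s g' g :=
  stmt18_general hdist h1 halg hmulcpt n s si hs hsicpt f hglue
end
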